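/- arXiv:1508.07619 — 6 statements merged into one kernel-verified Lean document; each statement's English description precedes it below -/
import Mathlib

section
/- Let λ ∈ ℝ, let μ : ℝ → ℝ and φ : ℝ → ℝ be differentiable, let ψ : ℝ → ℝ be twice differentiable, and let ℱ : ℝ × ℝ → ℝ be differentiable with ℱ(x,·) Lebesgue-integrable over ℝ for each x. If for all (x,v) ∈ ℝ²: λℱ(x,v) + v ∂ₓℱ(x,v) − φ'(x) ∂ᵥℱ(x,v) = −ψ'(x) v μ'(½v² + φ(x)) and ψ''(x) = ∫_ℝ ℱ(x,v) dv, then the function G(x,v) := ℱ(x,−v) satisfies for all (x,v) ∈ ℝ²: (−λ)G(x,v) + v ∂ₓG(x,v) − φ'(x) ∂ᵥG(x,v) = −ψ'(x) v μ'(½v² + φ(x)) and ψ''(x) = ∫_ℝ G(x,v) dv. Consequently the linearized system possesses an eigenmode with exponent λ if and only if it possesses one with exponent −λ. -/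
open MeasureTheory

/-- An eigenmode of the linearized Vlasov–Poisson perturbation equations with exponent `lam`:
a pair `(F, ψ)` (with field perturbation `β = e^{λt}(−ψ')`) satisfying
`λF + v ∂ₓF − φ' ∂ᵥF = −ψ' v μ'(½v² + φ)` and `ψ'' = ∫ F dv`. -/
def IsEigenmode (μ φ : ℝ → ℝ) (lam : ℝ) (F : ℝ → ℝ → ℝ) (ψ : ℝ → ℝ) : Prop :=
  Differentiable ℝ (fun p : ℝ × ℝ => F p.1 p.2) ∧
  Differentiable ℝ ψ ∧ Differentiable ℝ (deriv ψ) ∧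
  (∀ x, Integrable (F x)) ∧
  (∀ x v, lam * F x v + v * deriv (fun x' => F x' v) x - deriv φ x * deriv (F x) v
      = - deriv ψ x * v * deriv μ (v ^ 2 / 2 + φ x)) ∧
  (∀ x, deriv (deriv ψ) x = ∫ v : ℝ, F x v)

/-! Under `v ↦ -v` the free-streaming operator `v ∂ₓ − φ' ∂ᵥ` changes sign, while the source
`−ψ' v μ'(½v² + φ)` is odd in `v`, and the charge density `∫ F dv` is unchanged; so only
the sign of `λ` flips. -/

theorem transport_eq_comp_neg_of_odd {lam : ℝ} {φ : ℝ → ℝ} {F S : ℝ → ℝ → ℝ}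
    (hS : ∀ x v, S x (-v) = -S x v)
    (h : ∀ x v, lam * F x v + v * deriv (fun x' => F x' v) x - deriv φ x * deriv (F x) v
      = S x v) (x v : ℝ) :
    (-lam) * F x (-v) + v * deriv (fun x' => F x' (-v)) x
      - deriv φ x * deriv (fun w => F x (-w)) v = S x v := by
  have h_neg := h x (-v)
  rw [hS] at h_neg
  rw [deriv_comp_neg]
  linarith

theorem vlasov_source_odd (μ φ ψ : ℝ → ℝ) (x v : ℝ) :
    -deriv ψ x * (-v) * deriv μ ((-v) ^ 2 / 2 + φ x)
      = -(-deriv ψ x * v * deriv μ (v ^ 2 / 2 + φ x)) := by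
  rw [neg_sq]
  ring

theorem IsEigenmode.comp_neg {μ φ : ℝ → ℝ} {lam : ℝ} {F : ℝ → ℝ → ℝ} {ψ : ℝ → ℝ}
    (h : IsEigenmode μ φ lam F ψ) :
    IsEigenmode μ φ (-lam) (fun x v => F x (-v)) ψ := by
  obtain ⟨hF, hψ, hψ', hFint, h_transport, h_density⟩ := h
  refine ⟨?_, hψ, hψ', fun x => (hFint x).comp_neg, ?_, ?_⟩
  · exact hF.comp (differentiable_fst.prodMk differentiable_snd.neg)
  · exact transport_eq_comp_neg_of_odd (vlasov_source_odd μ φ ψ) h_transport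
  · intro x
    rw [h_density, integral_neg_eq_self]

theorem exists_isEigenmode_neg_iff (μ φ : ℝ → ℝ) (lam : ℝ) :
    (∃ (F : ℝ → ℝ → ℝ) (ψ : ℝ → ℝ), IsEigenmode μ φ (-lam) F ψ) ↔
      ∃ (F : ℝ → ℝ → ℝ) (ψ : ℝ → ℝ), IsEigenmode μ φ lam F ψ := by
  constructor
  · rintro ⟨F, ψ, h⟩
    exact ⟨_, ψ, by simpa only [neg_neg] using h.comp_neg⟩
  · rintro ⟨F, ψ, h⟩
    exact ⟨_, ψ, h.comp_neg⟩

theorem eigenmode_reflection_general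
    (lam : ℝ) (μ φ : ℝ → ℝ)
    (ψ : ℝ → ℝ)
    (F : ℝ → ℝ → ℝ)
    (heq1 : ∀ x v, lam * F x v + v * deriv (fun x' => F x' v) x
        - deriv φ x * deriv (F x) v = - deriv ψ x * v * deriv μ (v ^ 2 / 2 + φ x))
    (heq2 : ∀ x, deriv (deriv ψ) x = ∫ v : ℝ, F x v) :
    ((∀ x v, (-lam) * F x (-v) + v * deriv (fun x' => F x' (-v)) x
        - deriv φ x * deriv (fun w => F x (-w)) v
        = - deriv ψ x * v * deriv μ (v ^ 2 / 2 + φ x)) ∧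
     (∀ x, deriv (deriv ψ) x = ∫ v : ℝ, F x (-v))) ∧
    ((∃ (F' : ℝ → ℝ → ℝ) (ψ' : ℝ → ℝ), IsEigenmode μ φ lam F' ψ') ↔
     (∃ (F' : ℝ → ℝ → ℝ) (ψ' : ℝ → ℝ), IsEigenmode μ φ (-lam) F' ψ')) := by
  refine ⟨⟨transport_eq_comp_neg_of_odd (vlasov_source_odd μ φ ψ) heq1, fun x => ?_⟩,
    (exists_isEigenmode_neg_iff μ φ lam).symm⟩
  rw [heq2, integral_neg_eq_self]

/-- **Modes of the linearized system occur in pairs of opposite exponent.**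
If `(F, ψ)` is an eigenmode with exponent `λ`, then `G(x,v) := F(x,−v)` together with the
same `ψ` is an eigenmode with exponent `−λ`; consequently the linearized system possesses
an eigenmode with exponent `λ` if and only if it possesses one with exponent `−λ`. -/
theorem eigenmode_reflection
    (lam : ℝ) (μ φ : ℝ → ℝ)
    (hμ : Differentiable ℝ μ) (hφ : Differentiable ℝ φ)
    (ψ : ℝ → ℝ) (hψ : Differentiable ℝ ψ) (hψ' : Differentiable ℝ (deriv ψ))
    (F : ℝ → ℝ → ℝ)
    (hF : Differentiable ℝ (fun p : ℝ × ℝ => F p.1 p.2))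
    (hFint : ∀ x, Integrable (F x))
    (heq1 : ∀ x v, lam * F x v + v * deriv (fun x' => F x' v) x
        - deriv φ x * deriv (F x) v = - deriv ψ x * v * deriv μ (v ^ 2 / 2 + φ x))
    (heq2 : ∀ x, deriv (deriv ψ) x = ∫ v : ℝ, F x v) :
    ((∀ x v, (-lam) * F x (-v) + v * deriv (fun x' => F x' (-v)) x
        - deriv φ x * deriv (fun w => F x (-w)) v
        = - deriv ψ x * v * deriv μ (v ^ 2 / 2 + φ x)) ∧
     (∀ x, deriv (deriv ψ) x = ∫ v : ℝ, F x (-v))) ∧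
    ((∃ (F' : ℝ → ℝ → ℝ) (ψ' : ℝ → ℝ), IsEigenmode μ φ lam F' ψ') ↔
     (∃ (F' : ℝ → ℝ → ℝ) (ψ' : ℝ → ℝ), IsEigenmode μ φ (-lam) F' ψ')) :=
  eigenmode_reflection_general lam μ φ ψ F heq1 heq2
end

section
/- Suppose the BGK assumptions hold. Then there exists x ∈ [0, P] such that q(x) := ∫_ℝ μ'(½v² + φ(x)) dv > 0. In particular, there exists e ∈ [φ₋, ∞) with μ'(e) > 0, i.e. μ cannot satisfy μ'(e) ≤ 0 for all e ∈ [φ₋, ∞); the BGK wave cannot support a particle distribution function μ that is monotonically decreasing on [φ₋, ∞). -/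
open MeasureTheory Set Filter Asymptotics

/-! If `q ≤ 0` on `[0, P/2]`, then `g x = ∫ μ(½v² + φ x) dv` has derivative `q φ' ≥ 0` there,
since `φ` decreases, so `φ'' = 1 - g` is antitone on `[0, P/2]`. Then `φ'` is concave on
`[0, P/2]` and vanishes at the extremum points `0` and `P/2`, hence is nonnegative, and `φ` cannot
be strictly decreasing on `[0, P/2]`. -/

lemma abs_le_of_abs_le_div_one_add_rpow {f : ℝ → ℝ} {C γ : ℝ} (hC : 0 ≤ C) (hγ : 0 ≤ γ)
    (hf : ∀ y, |f y| ≤ C / (1 + |y| ^ γ)) {b y : ℝ} (hby : b ≤ y) :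
    |f y| ≤ C / (1 + max b 0 ^ γ) := by
  refine (hf y).trans ?_
  gcongr
  exact max_le (hby.trans (le_abs_self y)) (abs_nonneg y)

lemma integrable_inv_one_add_rpow_max_half_sq_add {γ : ℝ} (hγ : 1 < γ) (b : ℝ) :
    Integrable (fun v : ℝ => (1 + max (v ^ 2 / 2 + b) 0 ^ γ)⁻¹) := by
  have hcont : Continuous (fun v : ℝ => (1 + max (v ^ 2 / 2 + b) 0 ^ γ)⁻¹) :=
    Continuous.inv₀ (by fun_prop (disch := positivity)) fun v => by positivity
  refine hcont.locallyIntegrable.integrable_of_isBigO_cocompact ?_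
    ((integrable_one_add_norm (E := ℝ) (by simpa using hγ)).integrableAtFilter _)
  refine IsBigO.of_bound 1 ?_
  filter_upwards [tendsto_norm_cocompact_atTop.eventually_ge_atTop (4 + |b|)] with v hv
  have hlin : 1 + |v| ≤ v ^ 2 / 2 + b := by
    rw [Real.norm_eq_abs] at hv
    nlinarith [sq_abs v, neg_abs_le b, mul_nonneg (sub_nonneg.2 hv) (abs_nonneg v),
      mul_nonneg (abs_nonneg b) (abs_nonneg v)]
  rw [one_mul, Real.norm_of_nonneg (by positivity), Real.norm_of_nonneg (by positivity),
    Real.norm_eq_abs, Real.rpow_neg (by positivity)]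
  gcongr
  exact (Real.rpow_le_rpow (by positivity) (hlin.trans (le_max_left _ _)) (by linarith)).trans
    (le_add_of_nonneg_left zero_le_one)

theorem hasDerivAt_integral_comp_half_sq_add {μ φ : ℝ → ℝ} (hμ : ContDiff ℝ 1 μ) {C γ : ℝ}
    (hC : 0 ≤ C) (hγ : 1 < γ) (hdecay : ∀ y, |deriv μ y| ≤ C / (1 + |y| ^ γ))
    (hφ : ContDiff ℝ 1 φ) {b : ℝ} (hb : ∀ x, b ≤ φ x) {x₀ : ℝ}
    (hint : Integrable fun v : ℝ => μ (v ^ 2 / 2 + φ x₀)) :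
    HasDerivAt (fun x => ∫ v : ℝ, μ (v ^ 2 / 2 + φ x))
      ((∫ v : ℝ, deriv μ (v ^ 2 / 2 + φ x₀)) * deriv φ x₀) x₀ := by
  obtain ⟨M, hM⟩ : ∃ M, ∀ x ∈ Metric.closedBall x₀ 1, ‖deriv φ x‖ ≤ M :=
    (isCompact_closedBall x₀ 1).exists_bound_of_continuousOn
      (hφ.continuous_deriv le_rfl).continuousOn
  have hbound : Integrable fun v : ℝ => C / (1 + max (v ^ 2 / 2 + b) 0 ^ γ) * M := by
    simpa only [div_eq_mul_inv] using
      ((integrable_inv_one_add_rpow_max_half_sq_add hγ b).const_mul C).mul_const M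
  have hderiv := hasDerivAt_integral_of_dominated_loc_of_deriv_le
    (F := fun x (v : ℝ) => μ (v ^ 2 / 2 + φ x))
    (F' := fun x (v : ℝ) => deriv μ (v ^ 2 / 2 + φ x) * deriv φ x)
    (Metric.ball_mem_nhds x₀ one_pos)
    (Eventually.of_forall fun x => (hμ.continuous.comp (by fun_prop)).aestronglyMeasurable)
    hint
    (((hμ.continuous_deriv le_rfl).comp (by fun_prop)).mul continuous_const).aestronglyMeasurable
    (Eventually.of_forall fun v x hx => ?_) hbound
    (Eventually.of_forall fun v x _ => ?_)
  · simpa only [integral_mul_const] using hderiv.2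
  · rw [norm_mul]
    exact mul_le_mul
      (abs_le_of_abs_le_div_one_add_rpow hC (by linarith) hdecay (by linarith [hb x]))
      (hM x (Metric.ball_subset_closedBall hx)) (norm_nonneg _) (by positivity)
  · exact (hμ.differentiable one_ne_zero _).hasDerivAt.comp x
      ((hφ.differentiable one_ne_zero x).hasDerivAt.const_add _)

theorem monotoneOn_Icc_of_antitoneOn_deriv_deriv {f : ℝ → ℝ} {a b : ℝ} (hf : Differentiable ℝ f)
    (hf' : Differentiable ℝ (deriv f)) (ha : deriv f a = 0) (hb : deriv f b = 0)
    (hanti : AntitoneOn (deriv (deriv f)) (Icc a b)) : MonotoneOn f (Icc a b) := by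
  have hconcave : ConcaveOn ℝ (Icc a b) (deriv f) :=
    (hanti.mono interior_subset).concaveOn_of_deriv (convex_Icc a b)
      hf'.continuous.continuousOn hf'.differentiableOn
  refine monotoneOn_of_deriv_nonneg (convex_Icc a b) hf.continuous.continuousOn
    hf.differentiableOn fun x hx => ?_
  obtain ⟨hax, hxb⟩ := interior_subset hx
  have hab := hax.trans hxb
  simpa [ha, hb] using hconcave.ge_on_segment (left_mem_Icc.2 hab) (right_mem_Icc.2 hab)
    (by rw [segment_eq_Icc hab]; exact ⟨hax, hxb⟩)

theorem exists_pos_integral_deriv_comp_half_sq_add {μ φ : ℝ → ℝ} {P : ℝ} (hP : 0 < P)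
    (hμ : ContDiff ℝ 1 μ) {C γ : ℝ} (hC : 0 ≤ C) (hγ : 1 < γ)
    (hdecay : ∀ y, |deriv μ y| ≤ C / (1 + |y| ^ γ)) (hφ : ContDiff ℝ 2 φ)
    (hφanti : StrictAntiOn φ (Icc 0 (P / 2))) (hφmax : ∀ x, φ x ≤ φ 0)
    (hφmin : ∀ x, φ (P / 2) ≤ φ x) (hμint : ∀ x, Integrable fun v : ℝ => μ (v ^ 2 / 2 + φ x))
    (hpoisson : ∀ x, deriv (deriv φ) x = 1 - ∫ v : ℝ, μ (v ^ 2 / 2 + φ x)) :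
    ∃ x ∈ Icc 0 (P / 2), 0 < ∫ v : ℝ, deriv μ (v ^ 2 / 2 + φ x) := by
  by_contra! hq
  have hg x := hasDerivAt_integral_comp_half_sq_add hμ hC hγ hdecay (hφ.of_le one_le_two)
    hφmin (hμint x)
  have hg_mono : MonotoneOn (fun x => ∫ v : ℝ, μ (v ^ 2 / 2 + φ x)) (Icc 0 (P / 2)) := by
    refine monotoneOn_of_hasDerivWithinAt_nonneg (convex_Icc _ _)
      (fun x _ => (hg x).continuousAt.continuousWithinAt) (fun x _ => (hg x).hasDerivWithinAt)
      fun x hx => ?_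
    rw [interior_Icc] at hx
    have hφ'_nonpos : deriv φ x ≤ 0 := by
      rw [← derivWithin_of_mem_nhds (Icc_mem_nhds hx.1 hx.2)]
      exact hφanti.antitoneOn.derivWithin_nonpos
    exact mul_nonneg_of_nonpos_of_nonpos (hq x (Ioo_subset_Icc_self hx)) hφ'_nonpos
  have hφ_mono : MonotoneOn φ (Icc 0 (P / 2)) :=
    monotoneOn_Icc_of_antitoneOn_deriv_deriv (hφ.differentiable two_ne_zero)
      hφ.differentiable_deriv_two (IsLocalMax.deriv_eq_zero (.of_forall hφmax))
      (IsLocalMin.deriv_eq_zero (.of_forall hφmin)) fun a ha b hb hab => by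
        simp only [hpoisson]; linarith [hg_mono ha hb hab]
  have hP2 : 0 < P / 2 := by positivity
  exact (hφanti (left_mem_Icc.2 hP2.le) (right_mem_Icc.2 hP2.le) hP2).not_ge
    (hφ_mono (left_mem_Icc.2 hP2.le) (right_mem_Icc.2 hP2.le) hP2.le)

theorem bgk_q_positive_somewhere_general
    (μ φ : ℝ → ℝ) (P : ℝ) (hP : 0 < P)
    (hμC1 : ContDiff ℝ 1 μ)
    (hdecay : ∃ C > (0:ℝ), ∃ γ > (1:ℝ), ∀ y, |deriv μ y| ≤ C / (1 + |y| ^ γ))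
    (hφC2 : ContDiff ℝ 2 φ)
    (hφanti : StrictAntiOn φ (Set.Icc 0 (P / 2)))
    (hφmax : ∀ x, φ x ≤ φ 0)
    (hφmin : ∀ x, φ (P / 2) ≤ φ x)
    (hμint : ∀ x, Integrable (fun v : ℝ => μ (v ^ 2 / 2 + φ x)))
    (hpoisson : ∀ x, deriv (deriv φ) x = 1 - ∫ v : ℝ, μ (v ^ 2 / 2 + φ x)) :
    (∃ x ∈ Set.Icc (0:ℝ) P, 0 < ∫ v : ℝ, deriv μ (v ^ 2 / 2 + φ x)) ∧
    (∃ e, φ (P / 2) ≤ e ∧ 0 < deriv μ e) ∧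
    ¬ (∀ e, φ (P / 2) ≤ e → deriv μ e ≤ 0) := by
  obtain ⟨C, hC, γ, hγ, hdecay⟩ := hdecay
  obtain ⟨x, hx, hqx⟩ := exists_pos_integral_deriv_comp_half_sq_add hP hμC1 hC.le hγ hdecay hφC2
    hφanti hφmax hφmin hμint hpoisson
  have hnot_anti : ¬ ∀ e, φ (P / 2) ≤ e → deriv μ e ≤ 0 := fun h =>
    hqx.not_ge <| integral_nonpos fun v => h _ (by nlinarith [hφmin x, sq_nonneg v])
  refine ⟨⟨x, Icc_subset_Icc_right (by linarith) hx, hqx⟩, ?_, hnot_anti⟩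
  push Not at hnot_anti
  exact hnot_anti

/-- **BGK waves cannot support a monotonically decreasing distribution function.**
Under the BGK assumptions there exists `x ∈ [0,P]` with `q(x) = ∫ μ'(½v² + φ(x)) dv > 0`;
in particular there is an energy `e ≥ φ₋ = φ(P/2)` with `μ'(e) > 0`, i.e. `μ` cannot
satisfy `μ'(e) ≤ 0` for all `e ∈ [φ₋, ∞)`. -/
theorem bgk_q_positive_somewhere
    (μ φ : ℝ → ℝ) (P : ℝ) (hP : 0 < P)
    (hμC1 : ContDiff ℝ 1 μ) (hμnonneg : ∀ y, 0 ≤ μ y)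
    (hdecay : ∃ C > (0:ℝ), ∃ γ > (1:ℝ), ∀ y, |deriv μ y| ≤ C / (1 + |y| ^ γ))
    (hφC2 : ContDiff ℝ 2 φ)
    (hφper : ∀ x, φ (x + P) = φ x)
    (hφsym : ∀ x ∈ Set.Icc 0 P, φ (P - x) = φ x)
    (hφanti : StrictAntiOn φ (Set.Icc 0 (P / 2)))
    (hφmax : ∀ x, φ x ≤ φ 0)
    (hφmin : ∀ x, φ (P / 2) ≤ φ x)
    (hμint : ∀ x, Integrable (fun v : ℝ => μ (v ^ 2 / 2 + φ x)))
    (hpoisson : ∀ x, deriv (deriv φ) x = 1 - ∫ v : ℝ, μ (v ^ 2 / 2 + φ x)) :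
    (∃ x ∈ Set.Icc (0:ℝ) P, 0 < ∫ v : ℝ, deriv μ (v ^ 2 / 2 + φ x)) ∧
    (∃ e, φ (P / 2) ≤ e ∧ 0 < deriv μ e) ∧
    ¬ (∀ e, φ (P / 2) ≤ e → deriv μ e ≤ 0) :=
  bgk_q_positive_somewhere_general μ φ P hP hμC1 hdecay hφC2 hφanti hφmax hφmin hμint hpoisson
end

section
/- Let P > 0 and let φ : ℝ → ℝ be three times differentiable with φ'(0) = φ'(P/2) = 0 and φ'(x) < 0 for all x ∈ (0, P/2). Let q : ℝ → ℝ be a function satisfying φ'''(x) = −q(x)φ'(x) for all x ∈ [0, P/2]. Then there exists x ∈ [0, P/2] such that q(x) > 0. -/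
/-- **Core calculus argument for Theorem 2.** If `φ` is three times differentiable with
`φ'(0) = φ'(P/2) = 0`, `φ' < 0` on `(0,P/2)`, and `φ''' = −qφ'` on `[0,P/2]`, then `q`
must be positive somewhere on `[0,P/2]`. -/
theorem q_positive_of_potential_well
    (P : ℝ) (hP : 0 < P) (φ q : ℝ → ℝ)
    (hφ1 : Differentiable ℝ φ)
    (hφ2 : Differentiable ℝ (deriv φ))
    (hφ3 : Differentiable ℝ (deriv (deriv φ)))
    (h0 : deriv φ 0 = 0) (hhalf : deriv φ (P / 2) = 0)
    (hneg : ∀ x ∈ Set.Ioo 0 (P / 2), deriv φ x < 0)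
    (hq : ∀ x ∈ Set.Icc 0 (P / 2),
      deriv (deriv (deriv φ)) x = - q x * deriv φ x) :
    ∃ x ∈ Set.Icc 0 (P / 2), 0 < q x := by
  by_contra h
  push_neg at h
  have hP2 : 0 < P / 2 := by linarith
  -- φ'' is antitone on [0, P/2]
  have hanti : AntitoneOn (deriv (deriv φ)) (Set.Icc 0 (P / 2)) := by
    apply antitoneOn_of_deriv_nonpos (convex_Icc 0 (P / 2))
      hφ3.continuous.continuousOn
      (hφ3.differentiableOn.mono interior_subset)
    intro x hx
    rw [interior_Icc] at hx
    rw [hq x (Set.Ioo_subset_Icc_self hx)]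
    have h1 : 0 ≤ -q x := by linarith [h x (Set.Ioo_subset_Icc_self hx)]
    have h2 : deriv φ x ≤ 0 := le_of_lt (hneg x hx)
    exact mul_nonpos_of_nonneg_of_nonpos h1 h2
  set m := P / 4 with hm
  have hm0 : 0 < m := by positivity
  have hmP : m < P / 2 := by linarith
  have hφm : deriv φ m < 0 := hneg m ⟨hm0, hmP⟩
  obtain ⟨c₁, hc₁, hd₁⟩ := exists_deriv_eq_slope (deriv φ) hm0
    hφ2.continuous.continuousOn hφ2.differentiableOn
  obtain ⟨c₂, hc₂, hd₂⟩ := exists_deriv_eq_slope (deriv φ) hmP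
    hφ2.continuous.continuousOn hφ2.differentiableOn
  rw [h0] at hd₁
  rw [hhalf] at hd₂
  have hneg1 : deriv (deriv φ) c₁ < 0 := by
    rw [hd₁]; apply div_neg_of_neg_of_pos <;> simp [hφm, hm0]
  have hpos2 : 0 < deriv (deriv φ) c₂ := by
    rw [hd₂]
    apply div_pos <;> simp [hφm] <;> linarith [hc₂.1, hc₂.2]
  have hc1m : c₁ ∈ Set.Icc 0 (P / 2) :=
    ⟨le_of_lt hc₁.1, le_of_lt (lt_trans hc₁.2 hmP)⟩
  have hc2m : c₂ ∈ Set.Icc 0 (P / 2) :=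
    ⟨le_of_lt (lt_trans hm0 hc₂.1), le_of_lt hc₂.2⟩
  have := hanti hc1m hc2m (le_of_lt (lt_trans hc₁.2 hc₂.1))
  linarith
end

section
/- Let μ : ℝ → ℝ be C¹ with |μ'(y)| ≤ C/(1+|y|^γ) for all y, for some C > 0 and γ > 1, and let φ : ℝ → ℝ be C² and bounded below. Assume that for every x the function v ↦ μ(½v² + φ(x)) is integrable over ℝ and that φ''(x) = 1 − ∫_ℝ μ(½v² + φ(x)) dv for all x. Then for every x the function v ↦ μ'(½v² + φ(x)) is integrable over ℝ, φ is three times differentiable, and φ'''(x) = −q(x) φ'(x) for all x, where q(x) := ∫_ℝ μ'(½v² + φ(x)) dv. -/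
open MeasureTheory

/-! Differentiating `φ'' = 1 − ∫ μ(½v² + φ) dv` under the integral sign gives `φ''' = −q φ'`.
The differentiation is justified by dominated convergence: since `φ ≥ m`, the argument
`½v² + φ(x)` is at least `½v² + m`, so the decay of `μ'` yields the `x`-independent bound
`|μ'(½v² + φ(x))| ≤ C / (1 + max(0, ½v² + m)^γ)`, which is `O((1 + v²)⁻¹)` as soon as `γ ≥ 1`;
on a neighbourhood of `x₀` the chain-rule factor `φ'` is bounded as well. -/

lemma le_one_add_rpow {t γ : ℝ} (ht : 0 ≤ t) (hγ : 1 ≤ γ) : t ≤ 1 + t ^ γ := by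
  rcases le_or_gt 1 t with h | h
  · linarith [Real.self_le_rpow_of_one_le h hγ]
  · linarith [Real.rpow_nonneg ht γ]

lemma one_add_sq_le_mul_one_add_max_rpow (m v : ℝ) {γ : ℝ} (hγ : 1 ≤ γ) :
    1 + v ^ 2 ≤ (3 + 2 * |m|) * (1 + max 0 (v ^ 2 / 2 + m) ^ γ) := by
  set T := max 0 (v ^ 2 / 2 + m) ^ γ
  have hT : v ^ 2 / 2 + m ≤ 1 + T :=
    (le_max_right _ _).trans (le_one_add_rpow (le_max_left _ _) hγ)
  have hT₀ : 0 ≤ T := Real.rpow_nonneg (le_max_left _ _) γ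
  have hm : |m| ≤ |m| * (1 + T) := le_mul_of_one_le_right (abs_nonneg m) (by linarith)
  nlinarith [neg_abs_le m]

lemma integrable_inv_one_add_max_rpow (m : ℝ) {γ : ℝ} (hγ : 1 ≤ γ) :
    Integrable fun v : ℝ => (1 + max 0 (v ^ 2 / 2 + m) ^ γ)⁻¹ := by
  have hpos : ∀ v : ℝ, 0 < 1 + max 0 (v ^ 2 / 2 + m) ^ γ := fun v => by
    linarith [Real.rpow_nonneg (le_max_left 0 (v ^ 2 / 2 + m)) γ]
  have hcont : Continuous fun v : ℝ => (1 + max 0 (v ^ 2 / 2 + m) ^ γ)⁻¹ :=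
    (continuous_const.add ((continuous_const.max (by fun_prop)).rpow_const
      fun _ => Or.inr (by linarith))).inv₀ fun v => (hpos v).ne'
  refine (integrable_inv_one_add_sq.const_mul (3 + 2 * |m|)).mono'
    hcont.aestronglyMeasurable (Filter.Eventually.of_forall fun v => ?_)
  rw [Real.norm_of_nonneg (inv_nonneg.2 (hpos v).le), ← div_eq_mul_inv,
    inv_le_iff_one_le_mul₀ (hpos v), div_mul_eq_mul_div, one_le_div (by positivity)]
  simpa only [mul_comm] using one_add_sq_le_mul_one_add_max_rpow m v hγ

lemma div_one_add_abs_rpow_le_of_le {C γ a y : ℝ} (hC : 0 ≤ C) (hγ : 0 ≤ γ) (hay : a ≤ y) :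
    C / (1 + |y| ^ γ) ≤ C * (1 + max 0 a ^ γ)⁻¹ := by
  have hmax : max 0 a ≤ |y| := max_le (abs_nonneg y) (hay.trans (le_abs_self y))
  rw [← div_eq_mul_inv]
  exact div_le_div_of_nonneg_left hC
    (by linarith [Real.rpow_nonneg (le_max_left 0 a) γ])
    (by linarith [Real.rpow_le_rpow (le_max_left 0 a) hmax hγ])

section IntegralCompAdd

variable {α : Type*} [MeasurableSpace α] {ν : Measure α} {f ψ : ℝ → ℝ} {h g : α → ℝ}

lemma integrable_deriv_comp_add (hf : ContDiff ℝ 1 f) (hh : Measurable h)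
    (hg : Integrable g ν) (c : ℝ) (hfg : ∀ a, |deriv f (h a + c)| ≤ g a) :
    Integrable (fun a => deriv f (h a + c)) ν :=
  hg.mono' ((hf.continuous_deriv le_rfl).measurable.comp (hh.add_const c)).aestronglyMeasurable
    (Filter.Eventually.of_forall hfg)

theorem hasDerivAt_integral_comp_add (hf : ContDiff ℝ 1 f) (hψ : ContDiff ℝ 1 ψ)
    (hh : Measurable h) (hg : Integrable g ν) (hfg : ∀ x a, |deriv f (h a + ψ x)| ≤ g a)
    {x₀ : ℝ} (hint : Integrable (fun a => f (h a + ψ x₀)) ν) :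
    HasDerivAt (fun x => ∫ a, f (h a + ψ x) ∂ν)
      ((∫ a, deriv f (h a + ψ x₀) ∂ν) * deriv ψ x₀) x₀ := by
  obtain ⟨K, hK⟩ := (isCompact_closedBall x₀ 1).exists_bound_of_continuousOn
    (hψ.continuous_deriv le_rfl).continuousOn
  have hderiv : ∀ a x, HasDerivAt (fun x => f (h a + ψ x)) (deriv f (h a + ψ x) * deriv ψ x) x :=
    fun a x => ((hf.differentiable one_ne_zero _).hasDerivAt).comp x
      (((hψ.differentiable one_ne_zero) x).hasDerivAt.const_add (h a))
  have hmeas : ∀ x, AEStronglyMeasurable (fun a => f (h a + ψ x)) ν := fun x =>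
    (hf.continuous.measurable.comp (hh.add_const _)).aestronglyMeasurable
  have hdom := hasDerivAt_integral_of_dominated_loc_of_deriv_le (bound := fun a => g a * K)
    (Metric.ball_mem_nhds x₀ one_pos) (Filter.Eventually.of_forall hmeas) hint
    ((integrable_deriv_comp_add hf hh hg (ψ x₀) (hfg x₀)).aestronglyMeasurable.mul_const _)
    (Filter.Eventually.of_forall fun a x hx => ?_) (hg.mul_const K)
    (Filter.Eventually.of_forall fun a x _ => hderiv a x)
  · simpa only [integral_mul_const] using hdom.2
  · rw [norm_mul]
    exact mul_le_mul (hfg x a) (hK x (Metric.ball_subset_closedBall hx)) (norm_nonneg _)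
      ((abs_nonneg _).trans (hfg x a))

end IntegralCompAdd

/-- **Differentiation under the integral for the BGK Poisson equation.** If `μ` is `C¹`
with decaying derivative, `φ` is `C²` and bounded below, and `φ'' = 1 − ∫ μ(½v² + φ) dv`,
then `v ↦ μ'(½v² + φ(x))` is integrable, `φ` is three times differentiable, and
`φ''' = −qφ'` where `q(x) = ∫ μ'(½v² + φ(x)) dv`. -/
theorem bgk_potential_third_derivative
    (μ φ : ℝ → ℝ) (C γ : ℝ) (hC : 0 < C) (hγ : 1 < γ)
    (hμC1 : ContDiff ℝ 1 μ)
    (hdecay : ∀ y, |deriv μ y| ≤ C / (1 + |y| ^ γ))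
    (hφC2 : ContDiff ℝ 2 φ)
    (hφbdd : BddBelow (Set.range φ))
    (hμint : ∀ x, Integrable (fun v : ℝ => μ (v ^ 2 / 2 + φ x)))
    (hpoisson : ∀ x, deriv (deriv φ) x = 1 - ∫ v : ℝ, μ (v ^ 2 / 2 + φ x)) :
    (∀ x, Integrable (fun v : ℝ => deriv μ (v ^ 2 / 2 + φ x))) ∧
    Differentiable ℝ (deriv (deriv φ)) ∧
    (∀ x, deriv (deriv (deriv φ)) x
        = - (∫ v : ℝ, deriv μ (v ^ 2 / 2 + φ x)) * deriv φ x) := by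
  obtain ⟨m, hm⟩ := hφbdd
  have hbound : ∀ x v, |deriv μ (v ^ 2 / 2 + φ x)| ≤ C * (1 + max 0 (v ^ 2 / 2 + m) ^ γ)⁻¹ :=
    fun x v => (hdecay _).trans <| div_one_add_abs_rpow_le_of_le hC.le (by linarith)
      (by linarith [hm ⟨x, rfl⟩])
  have hg := (integrable_inv_one_add_max_rpow m hγ.le).const_mul C
  have hsq : Measurable fun v : ℝ => v ^ 2 / 2 := by fun_prop
  have hφ'' : deriv (deriv φ) = fun x => 1 - ∫ v : ℝ, μ (v ^ 2 / 2 + φ x) := funext hpoisson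
  have hφ''' : ∀ x, HasDerivAt (deriv (deriv φ))
      (-(∫ v : ℝ, deriv μ (v ^ 2 / 2 + φ x)) * deriv φ x) x := fun x => by
    rw [hφ'', neg_mul]
    exact (hasDerivAt_integral_comp_add hμC1 (hφC2.of_le (by norm_num)) hsq hg hbound
      (hμint x)).const_sub 1
  exact ⟨fun x => integrable_deriv_comp_add hμC1 hsq hg (φ x) (hbound x),
    fun x => (hφ''' x).differentiableAt, fun x => (hφ''' x).deriv⟩
end

section
/- Let P > 0, let q : ℝ → ℝ be continuous, let λ₀ ∈ ℝ, and let u₀ : ℝ → ℝ be C² with u₀''(x) + (q(x) + λ₀)u₀(x) = 0 for all x ∈ [0,P] and u₀(0) = u₀(P) = 0. Then ∫₀^P |u₀'(x)|⁴ dx = 3 ∫₀^P (q(x) + λ₀) |u₀(x) u₀'(x)|² dx. -/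
open intervalIntegral

/-! Integrating `u'⁴ = u' · u'³` by parts against `u`, the boundary term `u u'³` vanishes at the
Dirichlet endpoints, leaving `∫ u'⁴ = -3 ∫ u u'² u''`; the equation `u'' = -(q + λ₀) u` then turns
the right-hand side into `3 ∫ (q + λ₀) (u u')²`. -/

theorem integral_deriv_pow_four_eq_of_dirichlet {u u' u'' : ℝ → ℝ} {a b : ℝ}
    (hu : ∀ x ∈ Set.uIcc a b, HasDerivAt u (u' x) x)
    (hu' : ∀ x ∈ Set.uIcc a b, HasDerivAt u' (u'' x) x)
    (hu''_int : IntervalIntegrable u'' MeasureTheory.volume a b)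
    (ha : u a = 0) (hb : u b = 0) :
    ∫ x in a..b, u' x ^ 4 = -3 * ∫ x in a..b, u x * u' x ^ 2 * u'' x := by
  have hu'_cont : ContinuousOn u' (Set.uIcc a b) :=
    fun x hx => (hu' x hx).continuousAt.continuousWithinAt
  have hcube : ∀ x ∈ Set.uIcc a b, HasDerivAt (fun y => u' y ^ 3) (3 * u' x ^ 2 * u'' x) x := by
    intro x hx
    simpa using (hu' x hx).fun_pow 3
  have hparts := integral_mul_deriv_eq_deriv_mul hu hcube hu'_cont.intervalIntegrable
    (hu''_int.continuousOn_mul (by fun_prop))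
  rw [ha, hb] at hparts
  calc ∫ x in a..b, u' x ^ 4 = ∫ x in a..b, u' x * u' x ^ 3 := by
        congr 1; ext x; ring
    _ = -∫ x in a..b, u x * (3 * u' x ^ 2 * u'' x) := by rw [hparts]; ring
    _ = -3 * ∫ x in a..b, u x * u' x ^ 2 * u'' x := by
        rw [← integral_const_mul, ← integral_neg]; congr 1; ext x; ring

theorem quartic_derivative_identity_general
    (P : ℝ) (hP : 0 < P) (q : ℝ → ℝ)
    (lam₀ : ℝ) (u₀ : ℝ → ℝ) (hu₀C2 : ContDiff ℝ 2 u₀)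
    (hode : ∀ x ∈ Set.Icc 0 P, deriv (deriv u₀) x + (q x + lam₀) * u₀ x = 0)
    (hu₀0 : u₀ 0 = 0) (hu₀P : u₀ P = 0) :
    ∫ x in (0:ℝ)..P, (deriv u₀ x) ^ 4
      = 3 * ∫ x in (0:ℝ)..P, (q x + lam₀) * (u₀ x * deriv u₀ x) ^ 2 := by
  have hu₀' : ContDiff ℝ 1 (deriv u₀) := hu₀C2.deriv'
  have hu₀ : ∀ x, HasDerivAt u₀ (deriv u₀ x) x :=
    fun x => ((hu₀C2.differentiable two_ne_zero) x).hasDerivAt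
  have hu₀'' : ∀ x, HasDerivAt (deriv u₀) (deriv (deriv u₀) x) x :=
    fun x => ((hu₀'.differentiable one_ne_zero) x).hasDerivAt
  rw [integral_deriv_pow_four_eq_of_dirichlet (fun x _ => hu₀ x) (fun x _ => hu₀'' x)
    ((hu₀'.continuous_deriv le_rfl).intervalIntegrable 0 P) hu₀0 hu₀P]
  have hsubst : ∫ x in (0:ℝ)..P, u₀ x * deriv u₀ x ^ 2 * deriv (deriv u₀) x
      = ∫ x in (0:ℝ)..P, -((q x + lam₀) * (u₀ x * deriv u₀ x) ^ 2) := by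
    refine integral_congr fun x hx => ?_
    rw [Set.uIcc_of_le hP.le] at hx
    rw [eq_neg_of_add_eq_zero_left (hode x hx)]
    ring
  rw [hsubst, integral_neg]
  ring

/-- **Integration-by-parts identity I.** For a Dirichlet solution `u₀` of
`u'' + (q + λ₀)u = 0` on `[0,P]`,
`∫₀^P |u₀'|⁴ dx = 3∫₀^P (q + λ₀)|u₀u₀'|² dx`. -/
theorem quartic_derivative_identity
    (P : ℝ) (hP : 0 < P) (q : ℝ → ℝ) (hq : Continuous q)
    (lam₀ : ℝ) (u₀ : ℝ → ℝ) (hu₀C2 : ContDiff ℝ 2 u₀)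
    (hode : ∀ x ∈ Set.Icc 0 P, deriv (deriv u₀) x + (q x + lam₀) * u₀ x = 0)
    (hu₀0 : u₀ 0 = 0) (hu₀P : u₀ P = 0) :
    ∫ x in (0:ℝ)..P, (deriv u₀ x) ^ 4
      = 3 * ∫ x in (0:ℝ)..P, (q x + lam₀) * (u₀ x * deriv u₀ x) ^ 2 :=
  quartic_derivative_identity_general P hP q lam₀ u₀ hu₀C2 hode hu₀0 hu₀P
end

section
/- Let P > 0, let q : ℝ → ℝ be continuous, let λ₀ ∈ ℝ, and let u₀ : ℝ → ℝ be C² with u₀''(x) + (q(x) + λ₀)u₀(x) = 0 for all x ∈ [0,P] and u₀(0) = u₀(P) = 0. Define ψ(x) := u₀(x)u₀'(x). Then ∫₀^P (|ψ'(x)|² − q(x)|ψ(x)|²) dx = ∫₀^P (q(x) + λ₀)(q(x) + (4/3)λ₀) |u₀(x)|⁴ dx. -/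
/-!
With `u₀'' = -(q + λ₀)u₀` one has `ψ' = u₀'² + u₀u₀''`, and the integrand
`ψ'² − qψ² − (q + λ₀)(q + 4λ₀/3)u₀⁴` is, pointwise, the combination
`(u₀u₀'³)' + (λ₀/3)(u₀³u₀')'` of two exact derivatives. Both integrate to zero
because `u₀` vanishes at the endpoints.
-/

open intervalIntegral

section SecondOrder

variable {u : ℝ → ℝ}

theorem ContDiff.continuous_deriv_deriv_two (hu : ContDiff ℝ 2 u) :
    Continuous (deriv (deriv u)) :=
  ((contDiff_succ_iff_deriv (n := 1)).mp hu).2.2.continuous_deriv le_rfl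

theorem deriv_mul_deriv_of_contDiff_two (hu : ContDiff ℝ 2 u) (x : ℝ) :
    deriv (fun y => u y * deriv u y) x = deriv u x ^ 2 + u x * deriv (deriv u) x := by
  rw [((hu.differentiable two_ne_zero x).hasDerivAt.fun_mul
    (hu.differentiable_deriv_two x).hasDerivAt).deriv]
  ring

/-- The integrand is `(u^(k+1) u'^(l+1))'`. -/
theorem integral_deriv_pow_mul_deriv_pow_eq_zero (hu : ContDiff ℝ 2 u) {a b : ℝ}
    (ha : u a = 0) (hb : u b = 0) (k l : ℕ) :
    ∫ x in a..b, ((k + 1) * u x ^ k * deriv u x ^ (l + 2)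
      + (l + 1) * u x ^ (k + 1) * deriv u x ^ l * deriv (deriv u) x) = 0 := by
  have hu' := hu.differentiable two_ne_zero
  have hu'' := hu.differentiable_deriv_two
  have hc := hu.continuous
  have hc' := hu.continuous_deriv one_le_two
  have hc'' := hu.continuous_deriv_deriv_two
  have hderiv : ∀ x, HasDerivAt (fun y => u y ^ (k + 1) * deriv u y ^ (l + 1))
      ((k + 1) * u x ^ k * deriv u x ^ (l + 2)
        + (l + 1) * u x ^ (k + 1) * deriv u x ^ l * deriv (deriv u) x) x := by
    intro x
    refine (((hu' x).hasDerivAt.fun_pow (k + 1)).fun_mul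
      ((hu'' x).hasDerivAt.fun_pow (l + 1))).congr_deriv ?_
    simp only [Nat.add_sub_cancel, Nat.cast_add, Nat.cast_one]
    ring
  rw [integral_eq_sub_of_hasDerivAt (fun x _ => hderiv x)
    (Continuous.intervalIntegrable (by fun_prop) a b)]
  simp [ha, hb]

end SecondOrder

theorem quadratic_form_integrand_eq {q lam u u' u'' : ℝ} (h : u'' + (q + lam) * u = 0) :
    (u' ^ 2 + u * u'') ^ 2 - q * (u * u') ^ 2
      = (q + lam) * (q + 4 / 3 * lam) * u ^ 4 + (u' ^ 4 + 3 * u * u' ^ 2 * u'')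
        + lam / 3 * (3 * u ^ 2 * u' ^ 2 + u ^ 3 * u'') := by
  obtain rfl : u'' = -((q + lam) * u) := by linarith
  ring

/-- **Evaluation of the quadratic form at `ψ = u₀u₀'`.** For a Dirichlet solution `u₀` of
`u'' + (q + λ₀)u = 0` on `[0,P]` and `ψ = u₀u₀'`,
`∫₀^P (|ψ'|² − q|ψ|²) dx = ∫₀^P (q + λ₀)(q + (4/3)λ₀)|u₀|⁴ dx`. -/
theorem quadratic_form_evaluation
    (P : ℝ) (hP : 0 < P) (q : ℝ → ℝ) (hq : Continuous q)
    (lam₀ : ℝ) (u₀ : ℝ → ℝ) (hu₀C2 : ContDiff ℝ 2 u₀)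
    (hode : ∀ x ∈ Set.Icc 0 P, deriv (deriv u₀) x + (q x + lam₀) * u₀ x = 0)
    (hu₀0 : u₀ 0 = 0) (hu₀P : u₀ P = 0)
    (ψ : ℝ → ℝ) (hψ : ψ = fun x => u₀ x * deriv u₀ x) :
    ∫ x in (0:ℝ)..P, ((deriv ψ x) ^ 2 - q x * (ψ x) ^ 2)
      = ∫ x in (0:ℝ)..P, (q x + lam₀) * (q x + (4 / 3) * lam₀) * (u₀ x) ^ 4 := by
  have hu := hu₀C2.continuous
  have hu' := hu₀C2.continuous_deriv one_le_two
  have hu'' := hu₀C2.continuous_deriv_deriv_two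
  have hA := integral_deriv_pow_mul_deriv_pow_eq_zero hu₀C2 hu₀0 hu₀P 2 0
  have hB := integral_deriv_pow_mul_deriv_pow_eq_zero hu₀C2 hu₀0 hu₀P 0 2
  norm_num at hA hB
  have hpointwise : Set.EqOn (fun x => (deriv ψ x) ^ 2 - q x * (ψ x) ^ 2)
      (fun x => (q x + lam₀) * (q x + 4 / 3 * lam₀) * u₀ x ^ 4
        + (deriv u₀ x ^ 4 + 3 * u₀ x * deriv u₀ x ^ 2 * deriv (deriv u₀) x)
        + lam₀ / 3 * (3 * u₀ x ^ 2 * deriv u₀ x ^ 2 + u₀ x ^ 3 * deriv (deriv u₀) x))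
      (Set.uIcc 0 P) := by
    intro x hx
    rw [Set.uIcc_of_le hP.le] at hx
    subst hψ
    simp only [deriv_mul_deriv_of_contDiff_two hu₀C2]
    exact quadratic_form_integrand_eq (hode x hx)
  rw [integral_congr hpointwise, integral_add, integral_add, integral_const_mul, hA, hB]
  all_goals first | exact Continuous.intervalIntegrable (by fun_prop) 0 P | ring
end
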